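/- arXiv:2506.08921 — 4 statements merged into one kernel-verified Lean document; each statement's English description precedes it below -/
import Mathlib

section
/- Under uniform stratification with S strata of the unit interval, if E^μ[(Q − S∘E)²] ≤ ε and g = S ∘ F⁻¹ is Lipschitz with ‖g'‖_∞ ≤ L, then for both the optimal and proportional allocations the stratified estimator variance satisfies Var[q̂_sMC] ≤ L²/(6 S² N) + 2Sε/N. -/
open MeasureTheory ProbabilityTheory

set_option maxHeartbeats 2000000 in
theorem stmt11 (d S : ℕ) (hS : 0 < S) (μ : Measure (Fin d → ℝ)) [IsProbabilityMeasure μ]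
    (Q : (Fin d → ℝ) → ℝ) (Sf : ℝ → ℝ) (E : (Fin d → ℝ) → ℝ) (F Finv : ℝ → ℝ)
    (hQm : Measurable Q) (hQ2 : MemLp Q 2 μ) (hE : Measurable E)
    (hSfm : Measurable (fun x => Sf (E x))) (hFinvm : Measurable (fun u => Sf (Finv u)))
    (hinv1 : Function.LeftInverse Finv F) (hinv2 : Function.RightInverse Finv F)
    (hmap : Measure.map (fun x => F (E x)) μ = volume.restrict (Set.Icc (0:ℝ) 1))
    (ε : ℝ) (hε : 0 ≤ ε)
    (hloss : ∫ x, (Q x - Sf (E x)) ^ 2 ∂μ ≤ ε)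
    (L : ℝ) (hL : 0 ≤ L)
    (hLip : ∀ x ∈ Set.Icc (0:ℝ) 1, ∀ y ∈ Set.Icc (0:ℝ) 1,
      |Sf (Finv x) - Sf (Finv y)| ≤ L * |x - y|)
    (N : ℝ) (hN : 0 < N) :
    (1 / N) * (∑ s : Fin S, (1 / (S : ℝ)) * Real.sqrt (variance Q
          (μ[|((fun x => F (E x)) ⁻¹' Set.Icc ((s : ℝ) / S) (((s : ℝ) + 1) / S))]))) ^ 2
        ≤ L ^ 2 / (6 * (S : ℝ) ^ 2 * N) + 2 * (S : ℝ) * ε / N ∧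
      (1 / ((S : ℝ) * N)) * ∑ s : Fin S, variance Q
          (μ[|((fun x => F (E x)) ⁻¹' Set.Icc ((s : ℝ) / S) (((s : ℝ) + 1) / S))])
        ≤ L ^ 2 / (6 * (S : ℝ) ^ 2 * N) + 2 * (S : ℝ) * ε / N := by
  have hSR : (0:ℝ) < S := by exact_mod_cast hS
  set FE : (Fin d → ℝ) → ℝ := fun x => F (E x) with hFEdef
  -- FE is a.e. measurable
  have hae : AEMeasurable FE μ := by
    by_contra h
    rw [Measure.map_of_not_aemeasurable h] at hmap
    have h1 := congrArg (fun m : Measure ℝ => m (Set.Icc (0:ℝ) 1)) hmap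
    simp [Measure.restrict_apply measurableSet_Icc, Real.volume_Icc] at h1
  have hSE_eq : ∀ x, Sf (E x) = Sf (Finv (FE x)) := fun x =>
    (congrArg Sf (hinv1 (E x))).symm
  -- FE lands in [0,1] a.e.
  have haeIcc : ∀ᵐ x ∂μ, FE x ∈ Set.Icc (0:ℝ) 1 := by
    have h0 : μ (FE ⁻¹' (Set.Icc (0:ℝ) 1)ᶜ) = 0 := by
      rw [← Measure.map_apply_of_aemeasurable hae measurableSet_Icc.compl, hmap,
        Measure.restrict_apply measurableSet_Icc.compl]
      simp
    rw [ae_iff]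
    convert h0 using 2
    rfl
  -- bound for g = Sf ∘ Finv on [0,1]
  have hgbound : ∀ u ∈ Set.Icc (0:ℝ) 1, |Sf (Finv u)| ≤ |Sf (Finv (1/2))| + L := by
    intro u hu
    have h2 : (1/2:ℝ) ∈ Set.Icc (0:ℝ) 1 := by norm_num
    have hl := hLip u hu (1/2) h2
    have habs : |u - 1/2| ≤ 1 := by
      rcases hu with ⟨h0, h1⟩; rw [abs_le]; constructor <;> linarith
    have htri : |Sf (Finv u)| ≤ |Sf (Finv u) - Sf (Finv (1/2))| + |Sf (Finv (1/2))| := by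
      simpa using abs_add_le (Sf (Finv u) - Sf (Finv (1/2))) (Sf (Finv (1/2)))
    nlinarith [abs_nonneg (u - 1/2)]
  have hSfE2 : MemLp (fun x => Sf (E x)) 2 μ := by
    refine MemLp.of_bound hSfm.aestronglyMeasurable (|Sf (Finv (1/2))| + L) ?_
    filter_upwards [haeIcc] with x hx
    rw [Real.norm_eq_abs, hSE_eq x]
    exact hgbound _ hx
  have hQS2 : MemLp (fun x => Q x - Sf (E x)) 2 μ := hQ2.sub hSfE2
  have hQSint : Integrable (fun x => (Q x - Sf (E x))^2) μ := hQS2.integrable_sq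
  -- the main per-stratum bound
  have key : ∀ s : Fin S, variance Q (μ[|FE ⁻¹' Set.Icc ((s:ℝ)/S) (((s:ℝ)+1)/S)])
      ≤ L^2/(6*(S:ℝ)^2) + 2*(S:ℝ)*ε := by
    intro s
    set a : ℝ := (s:ℝ)/S with ha
    set b : ℝ := ((s:ℝ)+1)/S with hb
    set m : ℝ := (a+b)/2 with hm
    set B : Set ℝ := Set.Icc a b with hBdef
    set A : Set (Fin d → ℝ) := FE ⁻¹' B with hAdef
    set ν : Measure (Fin d → ℝ) := μ[|A] with hν
    set c : ℝ := Sf (Finv m) with hc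
    have hs0 : (0:ℝ) ≤ (s:ℝ) := Nat.cast_nonneg _
    have hsS : (s:ℝ) + 1 ≤ S := by exact_mod_cast Nat.succ_le_of_lt s.isLt
    have hab : a ≤ b := by rw [ha, hb]; gcongr; linarith
    have hba : b - a = 1/S := by rw [ha, hb]; field_simp; ring
    have ha0 : 0 ≤ a := by positivity
    have hb1 : b ≤ 1 := by rw [hb]; rw [div_le_one hSR]; exact hsS
    have hBsub : B ⊆ Set.Icc (0:ℝ) 1 := Set.Icc_subset_Icc ha0 hb1
    have hm01 : m ∈ Set.Icc (0:ℝ) 1 := by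
      constructor <;> (rw [hm]; first | linarith | linarith)
    have hBmeas : MeasurableSet B := measurableSet_Icc
    have hμA : μ A = ENNReal.ofReal (1/S) := by
      rw [hAdef, ← Measure.map_apply_of_aemeasurable hae hBmeas, hmap,
        Measure.restrict_apply hBmeas,
        Set.inter_eq_self_of_subset_left hBsub, hBdef, Real.volume_Icc, hba]
    have hAnull : NullMeasurableSet A μ := by
      rw [hAdef]; exact hae.nullMeasurable hBmeas
    have hμA0 : μ A ≠ 0 := by
      rw [hμA]
      exact (ENNReal.ofReal_pos.mpr (by positivity)).ne'
    have hinvtop : (μ A)⁻¹ ≠ ⊤ := ENNReal.inv_ne_top.mpr hμA0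
    have hcond : ν = (μ A)⁻¹ • μ.restrict A := rfl
    haveI hνprob : IsProbabilityMeasure ν := cond_isProbabilityMeasure hμA0
    have hsetint : ∀ f : ℝ → ℝ, Measurable f →
        ∫ x in A, f (FE x) ∂μ = ∫ u in B, f u := by
      intro f hf
      have h1 : ∫ u in B, f u ∂(Measure.map FE μ) = ∫ x in FE ⁻¹' B, f (FE x) ∂μ :=
        setIntegral_map hBmeas (by rw [hmap]; exact hf.aestronglyMeasurable) hae
      rw [hAdef, ← h1, hmap, Measure.restrict_restrict hBmeas,
        Set.inter_eq_self_of_subset_left hBsub]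
    clear_value c ν A B m b a
    have hcoef : ((μ A)⁻¹).toReal = (S:ℝ) := by
      rw [hμA, ENNReal.toReal_inv, ENNReal.toReal_ofReal (by positivity)]
      simp
    have hint : ∀ f : (Fin d → ℝ) → ℝ, ∫ x, f x ∂ν = S * ∫ x in A, f x ∂μ := by
      intro f
      rw [hcond, integral_smul_measure, hcoef, smul_eq_mul]
    have haeA : ∀ᵐ x ∂ν, FE x ∈ B := by
      rw [hcond]
      refine Measure.ae_smul_measure ((ae_restrict_mem₀ hAnull).mono fun x hx => ?_) _
      rw [hAdef] at hx; exact hx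
    have hac : ν ≪ μ := by
      rw [hcond]
      exact Measure.smul_absolutelyContinuous.trans
        (Measure.absolutelyContinuous_of_le Measure.restrict_le_self)
    have hFEν : AEMeasurable FE ν := hae.mono_ac hac
    have hMem : ∀ {f : (Fin d → ℝ) → ℝ}, MemLp f 2 μ → MemLp f 2 ν := by
      intro f hf
      rw [hcond]
      exact (hf.restrict A).smul_measure hinvtop
    have hQ2ν : MemLp Q 2 ν := hMem hQ2
    have hSfE2ν : MemLp (fun x => Sf (E x)) 2 ν := hMem hSfE2
    have hQSsqν : Integrable (fun x => (Q x - Sf (E x))^2) ν :=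
      (hQ2ν.sub hSfE2ν).integrable_sq
    have hQsqν : Integrable (fun x => (Q x)^2) ν := hQ2ν.integrable_sq
    have hQν : Integrable Q ν := hQ2ν.integrable one_le_two
    -- integrability of L^2 * (FE x - m)^2
    have hFEm2 : Integrable (fun x => L^2 * (FE x - m)^2) ν := by
      have hmeas : AEStronglyMeasurable (fun x => L^2 * (FE x - m)^2) ν := by
        exact (((hFEν.sub aemeasurable_const).pow aemeasurable_const).const_mul
          (L^2)).aestronglyMeasurable
      refine memLp_one_iff_integrable.mp (MemLp.of_bound hmeas (L^2 * 1) ?_)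
      filter_upwards [haeA] with x hx
      have h1 : |FE x - m| ≤ 1 := by
        have h2 := hBsub hx
        rcases h2 with ⟨h3, h4⟩
        rcases hm01 with ⟨h5, h6⟩
        rw [abs_le]; constructor <;> linarith
      rw [Real.norm_eq_abs, abs_of_nonneg (by positivity)]
      have : (FE x - m)^2 ≤ 1 := by nlinarith [abs_nonneg (FE x - m), sq_abs (FE x - m)]
      nlinarith [sq_nonneg L]
    -- variance bounded by second moment about c
    have hvar : variance Q ν ≤ ∫ x, (Q x - c)^2 ∂ν := by
      have hv := variance_eq_sub (μ := ν) hQ2ν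
      simp only [Pi.pow_apply] at hv
      have e1 : (fun x => (Q x - c)^2)
          = fun x => ((Q x)^2 - 2*c*Q x) + c^2 := by funext x; ring
      have i1 : Integrable (fun x => 2*c*Q x) ν := hQν.const_mul (2*c)
      have h1 : ∫ x, (Q x - c)^2 ∂ν
          = (∫ x, (Q x)^2 ∂ν) - 2*c*(∫ x, Q x ∂ν) + c^2 := by
        calc ∫ x, (Q x - c)^2 ∂ν = ∫ x, ((Q x)^2 - 2*c*Q x + c^2) ∂ν := by rw [e1]
          _ = (∫ x, ((Q x)^2 - 2*c*Q x) ∂ν) + ∫ _x, (c^2:ℝ) ∂ν :=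
              integral_add (hQsqν.sub i1) (integrable_const _)
          _ = ((∫ x, (Q x)^2 ∂ν) - ∫ x, 2*c*Q x ∂ν) + ∫ _x, (c^2:ℝ) ∂ν := by
              rw [integral_sub hQsqν i1]
          _ = (∫ x, (Q x)^2 ∂ν) - 2*c*(∫ x, Q x ∂ν) + c^2 := by
              rw [integral_const_mul, integral_const, probReal_univ,
                one_smul]
      rw [hv, h1]
      nlinarith [sq_nonneg ((∫ x, Q x ∂ν) - c)]
    -- pointwise bound and splitting
    have hsum : ∫ x, (Q x - c)^2 ∂ν
        ≤ ∫ x, (2*(Q x - Sf (E x))^2 + 2*(L^2 * (FE x - m)^2)) ∂ν := by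
      refine integral_mono_of_nonneg (Filter.Eventually.of_forall fun x => sq_nonneg _)
        ((hQSsqν.const_mul 2).add (hFEm2.const_mul 2)) ?_
      filter_upwards [haeA] with x hx
      have hlip := hLip (FE x) (hBsub hx) m hm01
      have h2 : (Sf (E x) - c)^2 ≤ L^2 * (FE x - m)^2 := by
        have hp := pow_le_pow_left₀ (abs_nonneg (Sf (Finv (FE x)) - Sf (Finv m))) hlip 2
        rw [hSE_eq x]
        calc (Sf (Finv (FE x)) - c)^2 = |Sf (Finv (FE x)) - Sf (Finv m)|^2 := by
              rw [hc, sq_abs]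
          _ ≤ (L * |FE x - m|)^2 := hp
          _ = L^2 * (FE x - m)^2 := by rw [mul_pow, sq_abs]
      nlinarith [sq_nonneg (Q x - 2*Sf (E x) + c)]
    have hsplit : ∫ x, (2*(Q x - Sf (E x))^2 + 2*(L^2 * (FE x - m)^2)) ∂ν
        = 2 * (∫ x, (Q x - Sf (E x))^2 ∂ν) + 2 * (∫ x, L^2 * (FE x - m)^2 ∂ν) := by
      have h := integral_add (μ := ν) (hQSsqν.const_mul 2) (hFEm2.const_mul 2)
      rw [integral_const_mul, integral_const_mul] at h
      exact h
    -- term 1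
    have ht1 : ∫ x, (Q x - Sf (E x))^2 ∂ν ≤ S * ε := by
      rw [hint]
      have h1 : ∫ x in A, (Q x - Sf (E x))^2 ∂μ ≤ ε :=
        le_trans (setIntegral_le_integral hQSint
          (Filter.Eventually.of_forall fun x => sq_nonneg _)) hloss
      calc (S:ℝ) * ∫ x in A, (Q x - Sf (E x))^2 ∂μ ≤ S * ε := by gcongr
        _ = S * ε := rfl
    -- term 2
    have hIB : ∫ u in B, (u - m)^2 = 1/(12*(S:ℝ)^3) := by
      have h1 : b - m = 1/(2*(S:ℝ)) := by
        have h2 : (1:ℝ)/(2*(S:ℝ)) = (1/S)/2 := by ring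
        rw [hm, h2, ← hba]; ring
      have h2 : a - m = -(1/(2*(S:ℝ))) := by
        have h3 : (1:ℝ)/(2*(S:ℝ)) = (1/S)/2 := by ring
        rw [hm, h3, ← hba]; ring
      rw [hBdef, MeasureTheory.integral_Icc_eq_integral_Ioc,
        ← intervalIntegral.integral_of_le hab,
        intervalIntegral.integral_comp_sub_right (fun u => u^2) m,
        integral_pow, h1, h2]
      have hS0 : (S:ℝ) ≠ 0 := ne_of_gt hSR
      push_cast
      field_simp
      ring
    have ht2 : ∫ x, L^2 * (FE x - m)^2 ∂ν = L^2 / (12*(S:ℝ)^2) := by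
      have hmeasf : Measurable (fun u : ℝ => L^2 * (u - m)^2) := by
        exact (((measurable_id.sub_const m).pow_const 2).const_mul _)
      have hp := hsetint (fun u => L^2 * (u - m)^2) hmeasf
      rw [hint, hp, integral_const_mul, hIB]
      have hS0 : (S:ℝ) ≠ 0 := ne_of_gt hSR
      field_simp
    calc variance Q ν ≤ ∫ x, (Q x - c)^2 ∂ν := hvar
      _ ≤ 2 * (∫ x, (Q x - Sf (E x))^2 ∂ν) + 2 * (∫ x, L^2 * (FE x - m)^2 ∂ν) := by
          rw [← hsplit]; exact hsum
      _ ≤ 2 * (S * ε) + 2 * (L^2/(12*(S:ℝ)^2)) := by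
          rw [ht2]; gcongr
      _ = L^2/(6*(S:ℝ)^2) + 2*(S:ℝ)*ε := by ring
  -- assemble
  set b0 : ℝ := L^2/(6*(S:ℝ)^2) + 2*(S:ℝ)*ε with hb0
  have hb0nn : 0 ≤ b0 := by positivity
  have hNS : (0:ℝ) < (S:ℝ)*N := by positivity
  constructor
  · set T : ℝ := ∑ s : Fin S, (1 / (S : ℝ)) * Real.sqrt (variance Q
      (μ[|FE ⁻¹' Set.Icc ((s : ℝ) / S) (((s : ℝ) + 1) / S)])) with hT
    have h1 : T ≤ Real.sqrt b0 := by
      rw [hT]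
      calc ∑ s : Fin S, (1 / (S : ℝ)) * Real.sqrt (variance Q
            (μ[|FE ⁻¹' Set.Icc ((s : ℝ) / S) (((s : ℝ) + 1) / S)]))
          ≤ ∑ _s : Fin S, (1 / (S : ℝ)) * Real.sqrt b0 := by
            refine Finset.sum_le_sum fun s _ => ?_
            exact mul_le_mul_of_nonneg_left (Real.sqrt_le_sqrt (key s)) (by positivity)
        _ = Real.sqrt b0 := by
            rw [Finset.sum_const, Finset.card_univ, Fintype.card_fin, nsmul_eq_mul]
            field_simp
    have h0 : 0 ≤ T := by
      rw [hT]
      exact Finset.sum_nonneg fun s _ => mul_nonneg (by positivity) (Real.sqrt_nonneg _)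
    have h2 : T^2 ≤ b0 := by
      have h3 := pow_le_pow_left₀ h0 h1 2
      rwa [Real.sq_sqrt hb0nn] at h3
    calc (1/N) * T^2 ≤ (1/N) * b0 := by gcongr
      _ = L ^ 2 / (6 * (S : ℝ) ^ 2 * N) + 2 * (S : ℝ) * ε / N := by
          rw [hb0]; field_simp
  · have h1 : ∑ s : Fin S, variance Q
        (μ[|FE ⁻¹' Set.Icc ((s : ℝ) / S) (((s : ℝ) + 1) / S)]) ≤ S * b0 := by
      calc ∑ s : Fin S, variance Q
            (μ[|FE ⁻¹' Set.Icc ((s : ℝ) / S) (((s : ℝ) + 1) / S)])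
          ≤ ∑ _s : Fin S, b0 := Finset.sum_le_sum fun s _ => key s
        _ = S * b0 := by
            rw [Finset.sum_const, Finset.card_univ, Fintype.card_fin, nsmul_eq_mul]
    calc (1 / ((S : ℝ) * N)) * ∑ s : Fin S, variance Q
          (μ[|FE ⁻¹' Set.Icc ((s : ℝ) / S) (((s : ℝ) + 1) / S)])
        ≤ (1 / ((S : ℝ) * N)) * ((S:ℝ) * b0) := by
          refine mul_le_mul_of_nonneg_left h1 (by positivity)
      _ = L ^ 2 / (6 * (S : ℝ) ^ 2 * N) + 2 * (S : ℝ) * ε / N := by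
          rw [hb0]; field_simp
end

section
/- The multifidelity Monte Carlo estimator q̂_MFMC with optimal coefficient α = Cov[Q^HF, Q^LF]/Var[Q^LF] and optimal sample allocation has variance Var[q̂_MFMC] = (1/N) Var^μ[Q^HF(X)] (√(1−ρ²) + √(wρ²))², where ρ is the Pearson correlation between Q^HF(X) and Q^LF(X), w the cost ratio, and N^HF = N/(1+wβ), N^LF = βN^HF with β = √(ρ²/(w(1−ρ²))). -/
open MeasureTheory ProbabilityTheory

section AuxMFMC

variable {Ω : Type*} [MeasurableSpace Ω] {μ : Measure Ω}

lemma aux_variance_congr {X Y : Ω → ℝ} (h : X =ᵐ[μ] Y) :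
    variance X μ = variance Y μ := by
  unfold ProbabilityTheory.variance ProbabilityTheory.evariance
  rw [integral_congr_ae h]
  congr 1
  apply lintegral_congr_ae
  filter_upwards [h] with ω hω
  rw [hω]

lemma aux_variance_comp {α : Type*} [MeasurableSpace α] {P : Measure Ω} {ν : Measure α}
    {X : Ω → α} (hXm : Measurable X) (hmap : Measure.map X P = ν)
    {g : α → ℝ} (hg : Measurable g) :
    variance (fun ω => g (X ω)) P = variance g ν := by
  unfold ProbabilityTheory.variance ProbabilityTheory.evariance
  rw [← hmap, integral_map hXm.aemeasurable hg.aestronglyMeasurable,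
    lintegral_map (by fun_prop) hXm]

lemma aux_integrable_mul {f g : Ω → ℝ} (hf : MemLp f 2 μ) (hg : MemLp g 2 μ) :
    Integrable (fun x => f x * g x) μ := by
  apply Integrable.mono' (((hf.integrable_sq.add hg.integrable_sq).const_mul (1/2 : ℝ)))
    (hf.aestronglyMeasurable.mul hg.aestronglyMeasurable)
  filter_upwards with x
  simp only [Real.norm_eq_abs, Pi.add_apply, Pi.mul_apply, abs_mul]
  nlinarith [abs_nonneg (f x), abs_nonneg (g x), sq_abs (f x), sq_abs (g x),
    sq_nonneg (|f x| - |g x|)]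

lemma aux_var_combo [IsProbabilityMeasure μ] {f g : Ω → ℝ} (hf : MemLp f 2 μ)
    (hg : MemLp g 2 μ) (a b : ℝ) :
    variance (fun x => a * f x + b * g x) μ
      = a^2 * variance f μ
        + 2*a*b*((∫ x, f x * g x ∂μ) - (∫ x, f x ∂μ) * (∫ x, g x ∂μ))
        + b^2 * variance g μ := by
  have h1 : MemLp (fun x => a * f x + b * g x) 2 μ := (hf.const_mul a).add (hg.const_mul b)
  rw [variance_eq_sub h1, variance_eq_sub hf, variance_eq_sub hg]
  have e2 : ∫ x, (a * f x + b * g x) ∂μ = a * ∫ x, f x ∂μ + b * ∫ x, g x ∂μ := by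
    rw [integral_add ((hf.integrable one_le_two).const_mul a)
      ((hg.integrable one_le_two).const_mul b), integral_const_mul _ _, integral_const_mul _ _]
  simp only [Pi.pow_apply]
  rw [show (∫ x, (a * f x + b * g x) ^ 2 ∂μ)
      = ∫ x, ((a^2 * f x ^ 2 + b^2 * g x ^ 2) + (2*a*b) * (f x * g x)) ∂μ from
      integral_congr_ae (by filter_upwards with x; ring)]
  have i1 : Integrable (fun x => a^2 * f x ^ 2 + b^2 * g x ^ 2) μ :=
    (hf.integrable_sq.const_mul _).add (hg.integrable_sq.const_mul _)
  have i2 : Integrable (fun x => (2*a*b) * (f x * g x)) μ :=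
    (aux_integrable_mul hf hg).const_mul _
  rw [integral_add i1 i2,
    integral_add (hf.integrable_sq.const_mul _) (hg.integrable_sq.const_mul _),
    integral_const_mul _ _, integral_const_mul _ _, integral_const_mul _ _]
  rw [e2]
  ring

lemma aux_filter_eq {m l : ℕ} (h : m ≤ l) :
    (Finset.univ.map (Fin.castLEEmb h))
      = Finset.univ.filter (fun n : Fin l => (n : ℕ) < m) := by
  ext n
  simp only [Finset.mem_map, Finset.mem_univ, true_and, Finset.mem_filter, Fin.castLEEmb,
    Function.Embedding.coeFn_mk]
  constructor
  · rintro ⟨k, rfl⟩; exact k.isLt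
  · intro hn; exact ⟨⟨(n : ℕ), hn⟩, by ext; simp⟩

lemma aux_sum_castLE {m l : ℕ} (h : m ≤ l) (F : Fin l → ℝ) :
    ∑ n : Fin m, F (Fin.castLE h n) = ∑ n : Fin l, if (n : ℕ) < m then F n else 0 := by
  rw [Finset.sum_ite, Finset.sum_const_zero, add_zero, ← aux_filter_eq h, Finset.sum_map]
  rfl

lemma aux_card_lt {m l : ℕ} (h : m ≤ l) :
    (Finset.univ.filter (fun n : Fin l => (n : ℕ) < m)).card = m := by
  rw [← aux_filter_eq h, Finset.card_map, Finset.card_univ, Fintype.card_fin]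

end AuxMFMC

set_option maxHeartbeats 1000000 in
theorem stmt15 (d : ℕ) (μ : Measure (Fin d → ℝ)) [IsProbabilityMeasure μ]
    (QHF QLF : (Fin d → ℝ) → ℝ) (hHF : MemLp QHF 2 μ) (hLF : MemLp QLF 2 μ)
    (hVLF : 0 < variance QLF μ)
    (w : ℝ) (hw : 0 < w) (hw1 : w < 1)
    (ρ : ℝ)
    (hρ : ρ = (∫ x, QHF x * QLF x ∂μ - (∫ x, QHF x ∂μ) * (∫ x, QLF x ∂μ))
        / Real.sqrt (variance QHF μ * variance QLF μ))
    (hρ1 : ρ ^ 2 < 1)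
    (α β : ℝ)
    (hα : α = (∫ x, QHF x * QLF x ∂μ - (∫ x, QHF x ∂μ) * (∫ x, QLF x ∂μ))
        / variance QLF μ)
    (hβ : β = Real.sqrt (ρ ^ 2 / (w * (1 - ρ ^ 2))))
    (N : ℝ) (NHF NLF : ℕ)
    (hNHF : (NHF : ℝ) = N / (1 + w * β)) (hNLF : (NLF : ℝ) = β * NHF)
    (hbudget : N = NHF + w * NLF)
    (hle : NHF ≤ NLF) (hNpos : 0 < NHF)
    (Ω : Type*) [MeasurableSpace Ω] (P : Measure Ω) [IsProbabilityMeasure P]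
    (x : Fin NLF → Ω → (Fin d → ℝ)) (hxm : ∀ n, Measurable (x n))
    (hlaw : ∀ n, Measure.map (x n) P = μ)
    (hind : iIndepFun x P) :
    variance (fun ω =>
        (NHF : ℝ)⁻¹ * ∑ n : Fin NHF, QHF (x (Fin.castLE hle n) ω)
          - α * ((NHF : ℝ)⁻¹ * ∑ n : Fin NHF, QLF (x (Fin.castLE hle n) ω)
            - (NLF : ℝ)⁻¹ * ∑ n : Fin NLF, QLF (x n ω))) P
      = (1 / N) * variance QHF μ
          * (Real.sqrt (1 - ρ ^ 2) + Real.sqrt (w * ρ ^ 2)) ^ 2 := by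
  classical
  -- measurable modifications
  have hHFae : AEMeasurable QHF μ := hHF.aestronglyMeasurable.aemeasurable
  have hLFae : AEMeasurable QLF μ := hLF.aestronglyMeasurable.aemeasurable
  set QHF' := hHFae.mk QHF with hQHF'def
  set QLF' := hLFae.mk QLF with hQLF'def
  have hmH : Measurable QHF' := hHFae.measurable_mk
  have hmL : Measurable QLF' := hLFae.measurable_mk
  have haeH : QHF =ᵐ[μ] QHF' := hHFae.ae_eq_mk
  have haeL : QLF =ᵐ[μ] QLF' := hLFae.ae_eq_mk
  have hHF' : MemLp QHF' 2 μ := hHF.ae_eq haeH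
  have hLF' : MemLp QLF' 2 μ := hLF.ae_eq haeL
  -- abbreviations
  set VH := variance QHF μ with hVHdef
  set VL := variance QLF μ with hVLdef
  set C := (∫ x, QHF x * QLF x ∂μ) - (∫ x, QHF x ∂μ) * (∫ x, QLF x ∂μ) with hCdef
  -- basic positivity
  have hm0 : (0:ℝ) < (NHF : ℝ) := by exact_mod_cast hNpos
  have hml : (NHF : ℝ) ≤ (NLF : ℝ) := by exact_mod_cast hle
  have hl0 : (0:ℝ) < (NLF : ℝ) := lt_of_lt_of_le hm0 hml
  have hβ1 : 1 ≤ β := by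
    have h1 : (NHF:ℝ) ≤ β * NHF := by rw [← hNLF]; exact hml
    nlinarith
  have hβ0 : (0:ℝ) < β := lt_of_lt_of_le one_pos hβ1
  have hρne : ρ ≠ 0 := by
    intro h
    rw [hβ, h] at hβ1
    norm_num at hβ1
  have hρ2pos : 0 < ρ^2 := by positivity
  have h1ρ : 0 < 1 - ρ^2 := by linarith
  have hVHnn : 0 ≤ VH := variance_nonneg _ _
  have hVHpos : 0 < VH := by
    rcases eq_or_lt_of_le hVHnn with h|h
    · exfalso; apply hρne; rw [hρ, ← h, zero_mul, Real.sqrt_zero, div_zero]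
    · exact h
  have hVLne : VL ≠ 0 := ne_of_gt hVLF
  have hsqpos : 0 < Real.sqrt (VH * VL) := Real.sqrt_pos.2 (mul_pos hVHpos hVLF)
  have hC : C = ρ * Real.sqrt (VH * VL) := by
    rw [hρ]
    field_simp
  have hC2 : C^2 = ρ^2 * (VH * VL) := by
    rw [hC, mul_pow, Real.sq_sqrt (mul_pos hVHpos hVLF).le]
  have hαeq : α = C / VL := hα
  have hαC : α * C = ρ^2 * VH := by
    have h1 : α * C = C^2 / VL := by rw [hαeq]; ring
    rw [h1, hC2]; field_simp
  have hα2 : α^2 * VL = ρ^2 * VH := by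
    have h1 : α^2 * VL = C^2 / VL := by rw [hαeq]; field_simp
    rw [h1, hC2]; field_simp
  have hβ2 : w * β^2 * (1 - ρ^2) = ρ^2 := by
    rw [hβ, Real.sq_sqrt (by positivity)]
    field_simp
  have hN : N = (NHF : ℝ) * (1 + w * β) := by
    have h1 : (0:ℝ) < 1 + w * β := by positivity
    rw [hNHF]; field_simp
  have hNpos' : 0 < N := by rw [hN]; positivity
  -- coefficients
  set c : ℝ := (NHF:ℝ)⁻¹ with hcdef
  set dd : ℝ := α * ((NLF:ℝ)⁻¹ - (NHF:ℝ)⁻¹) with hdddef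
  set e : ℝ := α * (NLF:ℝ)⁻¹ with hedef
  set a : Fin NLF → ℝ := fun n => if (n:ℕ) < NHF then c else 0 with hadef
  set b : Fin NLF → ℝ := fun n => if (n:ℕ) < NHF then dd else e with hbdef
  set g : Fin NLF → (Fin d → ℝ) → ℝ := fun n y => a n * QHF' y + b n * QLF' y with hgdef
  have hgm : ∀ n, Measurable (g n) := fun n => (hmH.const_mul _).add (hmL.const_mul _)
  -- step 1: replace by measurable version and rearrange into a single sum
  have hrearr : ∀ ω, (NHF : ℝ)⁻¹ * ∑ n : Fin NHF, QHF' (x (Fin.castLE hle n) ω)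
        - α * ((NHF : ℝ)⁻¹ * ∑ n : Fin NHF, QLF' (x (Fin.castLE hle n) ω)
          - (NLF : ℝ)⁻¹ * ∑ n : Fin NLF, QLF' (x n ω))
      = ∑ n : Fin NLF, g n (x n ω) := by
    intro ω
    rw [aux_sum_castLE hle (fun k => QHF' (x k ω)), aux_sum_castLE hle (fun k => QLF' (x k ω))]
    simp only [mul_sub, Finset.mul_sum]
    rw [← Finset.sum_sub_distrib, ← Finset.sum_sub_distrib]
    apply Finset.sum_congr rfl
    intro n _
    by_cases h : (n:ℕ) < NHF <;>
      simp only [hgdef, hadef, hbdef, hcdef, hdddef, hedef, h, if_true, if_false] <;> ring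
  have hstep1 : variance (fun ω =>
        (NHF : ℝ)⁻¹ * ∑ n : Fin NHF, QHF (x (Fin.castLE hle n) ω)
          - α * ((NHF : ℝ)⁻¹ * ∑ n : Fin NHF, QLF (x (Fin.castLE hle n) ω)
            - (NLF : ℝ)⁻¹ * ∑ n : Fin NLF, QLF (x n ω))) P
      = variance (fun ω => ∑ n : Fin NLF, g n (x n ω)) P := by
    apply aux_variance_congr
    have hA : ∀ᵐ ω ∂P, ∀ n : Fin NLF,
        QHF (x n ω) = QHF' (x n ω) ∧ QLF (x n ω) = QLF' (x n ω) := by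
      rw [ae_all_iff]
      intro n
      have h1 : (fun ω => QHF (x n ω)) =ᵐ[P] fun ω => QHF' (x n ω) :=
        ae_eq_comp (hxm n).aemeasurable ((hlaw n).symm ▸ haeH)
      have h2 : (fun ω => QLF (x n ω)) =ᵐ[P] fun ω => QLF' (x n ω) :=
        ae_eq_comp (hxm n).aemeasurable ((hlaw n).symm ▸ haeL)
      filter_upwards [h1, h2] with ω hω1 hω2
      exact ⟨hω1, hω2⟩
    filter_upwards [hA] with ω hω
    rw [show ∑ n : Fin NHF, QHF (x (Fin.castLE hle n) ω)
        = ∑ n : Fin NHF, QHF' (x (Fin.castLE hle n) ω) from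
      Finset.sum_congr rfl fun n _ => (hω _).1,
      show ∑ n : Fin NHF, QLF (x (Fin.castLE hle n) ω)
        = ∑ n : Fin NHF, QLF' (x (Fin.castLE hle n) ω) from
      Finset.sum_congr rfl fun n _ => (hω _).2,
      show ∑ n : Fin NLF, QLF (x n ω) = ∑ n : Fin NLF, QLF' (x n ω) from
      Finset.sum_congr rfl fun n _ => (hω _).2]
    exact hrearr ω
  rw [hstep1]
  -- step 2: variance of independent sum
  have hmem : ∀ n : Fin NLF, MemLp (fun ω => g n (x n ω)) 2 P := by
    intro n
    exact ((hHF'.const_mul (a n)).add (hLF'.const_mul (b n))).comp_measurePreserving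
      ⟨hxm n, hlaw n⟩
  have hsum : variance (fun ω => ∑ n : Fin NLF, g n (x n ω)) P
      = ∑ n : Fin NLF, variance (fun ω => g n (x n ω)) P := by
    rw [show (fun ω => ∑ n : Fin NLF, g n (x n ω))
        = ∑ n : Fin NLF, (fun ω => g n (x n ω)) by funext ω; simp]
    exact IndepFun.variance_sum (fun i _ => hmem i)
      (fun i _ j _ hij => (hind.indepFun hij).comp (hgm i) (hgm j))
  rw [hsum]
  -- step 3: per-sample variance
  have hint1 : ∫ y, QHF' y * QLF' y ∂μ = ∫ y, QHF y * QLF y ∂μ :=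
    integral_congr_ae (by filter_upwards [haeH, haeL] with y h1 h2; rw [h1, h2])
  have hint2 : ∫ y, QHF' y ∂μ = ∫ y, QHF y ∂μ := integral_congr_ae haeH.symm
  have hint3 : ∫ y, QLF' y ∂μ = ∫ y, QLF y ∂μ := integral_congr_ae haeL.symm
  have hvar_n : ∀ n : Fin NLF, variance (fun ω => g n (x n ω)) P
      = (a n)^2 * VH + 2*(a n)*(b n)*C + (b n)^2 * VL := by
    intro n
    rw [aux_variance_comp (hxm n) (hlaw n) (hgm n)]
    rw [show g n = fun y => a n * QHF' y + b n * QLF' y from rfl]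
    rw [aux_var_combo hHF' hLF' (a n) (b n)]
    rw [hint1, hint2, hint3,
      show variance QHF' μ = VH from (aux_variance_congr haeH).symm,
      show variance QLF' μ = VL from (aux_variance_congr haeL).symm]
  rw [Finset.sum_congr rfl fun n _ => hvar_n n]
  -- step 4: evaluate the sum
  have hsum2 : ∑ n : Fin NLF, ((a n)^2 * VH + 2*(a n)*(b n)*C + (b n)^2 * VL)
      = (NHF:ℝ) * (c^2*VH + 2*c*dd*C + dd^2*VL) + ((NLF:ℝ) - (NHF:ℝ)) * (e^2*VL) := by
    have hterm : ∀ n : Fin NLF, (a n)^2 * VH + 2*(a n)*(b n)*C + (b n)^2 * VL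
        = if (n:ℕ) < NHF then (c^2*VH + 2*c*dd*C + dd^2*VL) else e^2*VL := by
      intro n
      by_cases h : (n:ℕ) < NHF <;>
        simp only [hadef, hbdef, h, if_true, if_false] <;> ring
    rw [Finset.sum_congr rfl fun n _ => hterm n, Finset.sum_ite, Finset.sum_const,
      Finset.sum_const, aux_card_lt hle]
    have hcard2 : (Finset.univ.filter (fun n : Fin NLF => ¬ (n:ℕ) < NHF)).card = NLF - NHF := by
      have := Finset.card_filter_add_card_filter_not
        (s := (Finset.univ : Finset (Fin NLF))) (p := fun n : Fin NLF => (n:ℕ) < NHF)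
      rw [aux_card_lt hle, Finset.card_univ, Fintype.card_fin] at this
      omega
    rw [hcard2, nsmul_eq_mul, nsmul_eq_mul, Nat.cast_sub hle]
  rw [hsum2]
  -- step 5: algebra
  have hRHS : (Real.sqrt (1 - ρ^2) + Real.sqrt (w * ρ^2))^2 = (1 + w*β)^2 * (1 - ρ^2) := by
    have h1 : Real.sqrt (w * ρ^2) = w * β * Real.sqrt (1 - ρ^2) := by
      rw [show w * ρ^2 = (w*β)^2 * (1 - ρ^2) by linear_combination (-w) * hβ2]
      rw [Real.sqrt_mul (by positivity), Real.sqrt_sq (by positivity)]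
    rw [h1]
    have h2 := Real.sq_sqrt h1ρ.le
    linear_combination (1 + w*β)^2 * h2
  rw [hRHS]
  -- eliminate α
  have hc2 : c^2 * VH = c^2 * VH := rfl
  have hcddC : 2*c*dd*C = 2*c*((NLF:ℝ)⁻¹ - (NHF:ℝ)⁻¹) * (ρ^2 * VH) := by
    rw [show 2*c*dd*C = 2*c*((NLF:ℝ)⁻¹ - (NHF:ℝ)⁻¹) * (α * C) by rw [hdddef]; ring, hαC]
  have hddVL : dd^2 * VL = ((NLF:ℝ)⁻¹ - (NHF:ℝ)⁻¹)^2 * (ρ^2 * VH) := by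
    rw [show dd^2 * VL = ((NLF:ℝ)⁻¹ - (NHF:ℝ)⁻¹)^2 * (α^2 * VL) by rw [hdddef]; ring, hα2]
  have heVL : e^2 * VL = (NLF:ℝ)⁻¹ * (NLF:ℝ)⁻¹ * (ρ^2 * VH) := by
    rw [show e^2 * VL = (NLF:ℝ)⁻¹ * (NLF:ℝ)⁻¹ * (α^2 * VL) by rw [hedef]; ring, hα2]
  rw [hcddC, hddVL, heVL, hcdef, hNLF, hN]
  have hβne : β ≠ 0 := ne_of_gt hβ0
  have hmne : (NHF:ℝ) ≠ 0 := ne_of_gt hm0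
  have h1wβ : (0:ℝ) < 1 + w * β := by positivity
  field_simp
  linear_combination (-β) * hβ2
end

section
/- (Stratified multifidelity variance reduction, allocation (2).) Suppose ρ² ≥ 4w/(1+w)² and ρ_s ≥ ρ for all strata s = 1,…,S. Then the proportional-allocation stratified multifidelity estimator satisfies Var[q̂_sMFMC^{(2)}] = (1/N) Σ_s λ(A_s) Var_s (√(1−ρ_s²)+√(wρ_s²))² ≤ (1/N) Var[Q^HF] (√(1−ρ²)+√(wρ²))² = Var[q̂_MFMC], where Var_s = Var^μ[Q^HF(X)|X∈D_s]. -/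
open MeasureTheory ProbabilityTheory

lemma monoAux {w x y a b s : ℝ} (hw : 0 ≤ w) (hx0 : 0 ≤ x) (hxy : x ≤ y) (hy1 : y ≤ 1)
    (hkey : w * (1 - x ^ 2) ≤ x ^ 2)
    (ha0 : 0 ≤ a) (hb0 : 0 ≤ b) (hs0 : 0 ≤ s)
    (ha2 : a ^ 2 = 1 - x ^ 2) (hb2 : b ^ 2 = 1 - y ^ 2) (hs2 : s ^ 2 = w) :
    b + s * y ≤ a + s * x := by
  have hy0 : 0 ≤ y := hx0.trans hxy
  have hxx : x ^ 2 ≤ y ^ 2 := by nlinarith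
  have hsa : s * a ≤ x := by nlinarith [mul_nonneg hs0 ha0, sq_nonneg (s * a - x)]
  have hkey' : w * (1 - y ^ 2) ≤ y ^ 2 := by nlinarith [mul_le_mul_of_nonneg_left (by linarith : 1 - y ^ 2 ≤ 1 - x ^ 2) hw]
  have hsb : s * b ≤ y := by nlinarith [mul_nonneg hs0 hb0, sq_nonneg (s * b - y)]
  rcases eq_or_lt_of_le (add_nonneg ha0 hb0) with hab | hab
  · have ha' : a = 0 := by nlinarith
    have hb' : b = 0 := by nlinarith
    have hx1' : x = 1 := by nlinarith
    have hy1' : y = 1 := by nlinarith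
    simp [ha', hb', hx1', hy1']
  · have h1 : s * (y - x) * (a + b) ≤ (a - b) * (a + b) := by nlinarith
    have h2 : s * (y - x) ≤ a - b := le_of_mul_le_mul_right (by linarith [h1]) hab
    linarith

lemma monoF {w x y : ℝ} (hw : 0 ≤ w) (hx0 : 0 ≤ x) (hxy : x ≤ y) (hy1 : y ≤ 1)
    (hkey : w * (1 - x ^ 2) ≤ x ^ 2) :
    (Real.sqrt (1 - y ^ 2) + Real.sqrt (w * y ^ 2)) ^ 2
      ≤ (Real.sqrt (1 - x ^ 2) + Real.sqrt (w * x ^ 2)) ^ 2 := by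
  have hy0 : 0 ≤ y := hx0.trans hxy
  have hx1 : x ≤ 1 := hxy.trans hy1
  have hx2 : 0 ≤ 1 - x ^ 2 := by nlinarith
  have hy2 : 0 ≤ 1 - y ^ 2 := by nlinarith
  have hwx : Real.sqrt (w * x ^ 2) = Real.sqrt w * x := by
    rw [Real.sqrt_mul hw, Real.sqrt_sq hx0]
  have hwy : Real.sqrt (w * y ^ 2) = Real.sqrt w * y := by
    rw [Real.sqrt_mul hw, Real.sqrt_sq hy0]
  rw [hwx, hwy]
  have hmain := monoAux hw hx0 hxy hy1 hkey (Real.sqrt_nonneg (1 - x ^ 2))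
    (Real.sqrt_nonneg (1 - y ^ 2)) (Real.sqrt_nonneg w)
    (Real.sq_sqrt hx2) (Real.sq_sqrt hy2) (Real.sq_sqrt hw)
  have hnn : 0 ≤ Real.sqrt (1 - y ^ 2) + Real.sqrt w * y := by positivity
  exact pow_le_pow_left₀ hnn hmain 2

lemma covCS {α : Type*} [MeasurableSpace α] (ν : Measure α) [IsProbabilityMeasure ν]
    {f g : α → ℝ} (hf : MemLp f 2 ν) (hg : MemLp g 2 ν) :
    ∫ x, f x * g x ∂ν - (∫ x, f x ∂ν) * (∫ x, g x ∂ν)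
      ≤ Real.sqrt (variance f ν * variance g ν) := by
  set a := ∫ x, f x ∂ν with ha
  set b := ∫ x, g x ∂ν with hb
  have hf' : MemLp (fun x => f x - a) 2 ν := hf.sub (memLp_const a)
  have hg' : MemLp (fun x => g x - b) 2 ν := hg.sub (memLp_const b)
  set F := hf'.toLp _ with hF
  set G := hg'.toLp _ with hG
  -- integrable products
  have hfg : Integrable (fun x => (f x - a) * (g x - b)) ν := by
    have h := L2.integrable_inner (𝕜 := ℝ) F G
    refine h.congr ?_
    filter_upwards [hf'.coeFn_toLp, hg'.coeFn_toLp] with x h1 h2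
    simp [hF, hG, h1, h2, RCLike.inner_apply, mul_comm]
  have hfi : Integrable f ν := hf.integrable one_le_two
  have hgi : Integrable g ν := hg.integrable one_le_two
  have hfgmul : Integrable (fun x => f x * g x) ν := by
    have : (fun x => f x * g x)
        = fun x => (f x - a) * (g x - b) + (b * f x + a * g x - a * b) := by
      funext x; ring
    rw [this]
    exact hfg.add (((hfi.const_mul b).add (hgi.const_mul a)).sub (integrable_const _))
  -- covariance as centered integral
  have hcov : ∫ x, (f x - a) * (g x - b) ∂ν = ∫ x, f x * g x ∂ν - a * b := by
    have : (fun x => (f x - a) * (g x - b))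
        = fun x => f x * g x - (b * f x + a * g x - a * b) := by funext x; ring
    have i1 : Integrable (fun x => b * f x) ν := hfi.const_mul b
    have i2 : Integrable (fun x => a * g x) ν := hgi.const_mul a
    have i3 : Integrable (fun x => b * f x + a * g x) ν := by exact i1.add i2
    have i4 : Integrable (fun x => b * f x + a * g x - a * b) ν := by
      exact i3.sub (integrable_const _)
    rw [this, integral_sub hfgmul i4, integral_sub i3 (integrable_const _),
      integral_add i1 i2, integral_const_mul, integral_const_mul, integral_const]
    simp [← ha, ← hb]
    ring
  -- inner product identities
  have hinner : (inner ℝ F G : ℝ) = ∫ x, (f x - a) * (g x - b) ∂ν := by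
    rw [L2.inner_def]
    refine integral_congr_ae ?_
    filter_upwards [hf'.coeFn_toLp, hg'.coeFn_toLp] with x h1 h2
    simp [hF, hG, h1, h2, RCLike.inner_apply, mul_comm]
  have hvarf : variance f ν = ‖F‖ ^ 2 := by
    rw [← real_inner_self_eq_norm_sq, L2.inner_def, variance_eq_integral hf.aemeasurable]
    refine integral_congr_ae ?_ |>.symm
    filter_upwards [hf'.coeFn_toLp] with x h1
    simp [hF, h1, RCLike.inner_apply, ← ha, sq]
  have hvarg : variance g ν = ‖G‖ ^ 2 := by
    rw [← real_inner_self_eq_norm_sq, L2.inner_def, variance_eq_integral hg.aemeasurable]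
    refine integral_congr_ae ?_ |>.symm
    filter_upwards [hg'.coeFn_toLp] with x h1
    simp [hG, h1, RCLike.inner_apply, ← hb, sq]
  calc ∫ x, f x * g x ∂ν - a * b = (inner ℝ F G : ℝ) := by rw [hinner, hcov]
    _ ≤ ‖F‖ * ‖G‖ := real_inner_le_norm F G
    _ = Real.sqrt (variance f ν * variance g ν) := by
        rw [hvarf, hvarg, Real.sqrt_mul (sq_nonneg _), Real.sqrt_sq (norm_nonneg _),
          Real.sqrt_sq (norm_nonneg _)]

lemma memLp_cond' {α : Type*} [MeasurableSpace α] (μ : Measure α) [IsProbabilityMeasure μ]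
    {D : Set α} (hD : μ D ≠ 0) {f : α → ℝ} (hf : MemLp f 2 μ) : MemLp f 2 (μ[|D]) := by
  refine MemLp.of_measure_le_smul (c := (μ D)⁻¹) (by simp [hD]) ?_ hf
  rw [Measure.le_iff]
  intro s hs
  simp only [ProbabilityTheory.cond, Measure.smul_apply, smul_eq_mul]
  exact mul_le_mul_right (Measure.restrict_le_self s) _

lemma decompA {α : Type*} [MeasurableSpace α] (μ : Measure α) [IsProbabilityMeasure μ]
    {S : ℕ} (D : Fin S → Set α) (hDm : ∀ s, MeasurableSet (D s))
    (hDpos : ∀ s, 0 < μ (D s))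
    (hDdisj : ∀ i j, i ≠ j → μ (D i ∩ D j) = 0) (hDcov : μ (⋃ s, D s) = 1)
    {f : α → ℝ} (hint : Integrable f μ) :
    ∫ x, f x ∂μ = ∑ s, (μ (D s)).toReal * ∫ x, f x ∂(μ[|D s]) := by
  have hU : MeasurableSet (⋃ s, D s) := MeasurableSet.iUnion hDm
  have hcompl : μ (⋃ s, D s)ᶜ = 0 := by
    rw [measure_compl hU (measure_ne_top _ _), hDcov, measure_univ, tsub_self]
  have h1 : ∫ x, f x ∂μ = ∫ x in ⋃ s, D s, f x ∂μ := by
    rw [← integral_add_compl hU hint]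
    have : ∫ x in (⋃ s, D s)ᶜ, f x ∂μ = 0 := by
      rw [Measure.restrict_eq_zero.2 hcompl, integral_zero_measure]
    rw [this, add_zero]
  have h2 : ∫ x in ⋃ s, D s, f x ∂μ = ∑' s, ∫ x in D s, f x ∂μ :=
    integral_iUnion_ae (fun s => (hDm s).nullMeasurableSet)
      (fun i j hij => hDdisj i j hij) hint.integrableOn
  rw [h1, h2, tsum_fintype]
  refine Finset.sum_congr rfl fun s _ => ?_
  have hDne : (μ (D s)).toReal ≠ 0 := by
    simp [ENNReal.toReal_ne_zero, (hDpos s).ne', measure_ne_top]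
  rw [ProbabilityTheory.cond, integral_smul_measure, ENNReal.toReal_inv, smul_eq_mul,
    ← mul_assoc, mul_inv_cancel₀ hDne, one_mul]

lemma totalVar {α : Type*} [MeasurableSpace α] (μ : Measure α) [IsProbabilityMeasure μ]
    {S : ℕ} (D : Fin S → Set α) (hDm : ∀ s, MeasurableSet (D s))
    (hDpos : ∀ s, 0 < μ (D s))
    (hDdisj : ∀ i j, i ≠ j → μ (D i ∩ D j) = 0) (hDcov : μ (⋃ s, D s) = 1)
    {f : α → ℝ} (hf : MemLp f 2 μ) :
    ∑ s, (μ (D s)).toReal * variance f (μ[|D s]) ≤ variance f μ := by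
  haveI : ∀ s, IsProbabilityMeasure (μ[|D s]) :=
    fun s => cond_isProbabilityMeasure (hDpos s).ne'
  have hfc : ∀ s, MemLp f 2 (μ[|D s]) := fun s => memLp_cond' μ (hDpos s).ne' hf
  set lam : Fin S → ℝ := fun s => (μ (D s)).toReal with hlam
  set m : Fin S → ℝ := fun s => ∫ x, f x ∂(μ[|D s]) with hm
  have hlam0 : ∀ s, 0 ≤ lam s := fun s => ENNReal.toReal_nonneg
  have hsum1 : ∑ s, lam s = 1 := by
    have h := measure_iUnion₀ (μ := μ)
      (fun i j hij => hDdisj i j hij) (fun s => (hDm s).nullMeasurableSet)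
    rw [hDcov, tsum_fintype] at h
    have := congrArg ENNReal.toReal h
    rw [ENNReal.toReal_one, ENNReal.toReal_sum (fun s _ => measure_ne_top μ _)] at this
    exact this.symm
  have hv : ∀ s, variance f (μ[|D s]) = (∫ x, f x ^ 2 ∂(μ[|D s])) - m s ^ 2 := by
    intro s
    rw [variance_eq_sub (hfc s)]
    simp only [hm]
    rfl
  have hd2 : ∫ x, f x ^ 2 ∂μ = ∑ s, lam s * ∫ x, f x ^ 2 ∂(μ[|D s]) :=
    decompA μ D hDm hDpos hDdisj hDcov hf.integrable_sq
  have hd1 : ∫ x, f x ∂μ = ∑ s, lam s * m s :=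
    decompA μ D hDm hDpos hDdisj hDcov (hf.integrable one_le_two)
  have hCS : (∑ s, lam s * m s) ^ 2 ≤ ∑ s, lam s * m s ^ 2 := by
    have h := Finset.sum_mul_sq_le_sq_mul_sq Finset.univ
      (fun s => Real.sqrt (lam s)) (fun s => Real.sqrt (lam s) * m s)
    have e1 : ∀ s : Fin S, Real.sqrt (lam s) * (Real.sqrt (lam s) * m s) = lam s * m s := by
      intro s; rw [← mul_assoc, Real.mul_self_sqrt (hlam0 s)]
    have e2 : ∀ s : Fin S, Real.sqrt (lam s) ^ 2 = lam s := fun s => Real.sq_sqrt (hlam0 s)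
    have e3 : ∀ s : Fin S, (Real.sqrt (lam s) * m s) ^ 2 = lam s * m s ^ 2 := by
      intro s; rw [mul_pow, e2]
    simp only [e1, e2, e3] at h
    calc (∑ s, lam s * m s) ^ 2 ≤ (∑ s, lam s) * ∑ s, lam s * m s ^ 2 := h
      _ = ∑ s, lam s * m s ^ 2 := by rw [hsum1, one_mul]
  have hvar : variance f μ = (∫ x, f x ^ 2 ∂μ) - (∫ x, f x ∂μ) ^ 2 := by
    rw [variance_eq_sub hf]; rfl
  calc ∑ s, lam s * variance f (μ[|D s])
      = ∑ s, (lam s * ∫ x, f x ^ 2 ∂(μ[|D s]) - lam s * m s ^ 2) := by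
        refine Finset.sum_congr rfl fun s _ => ?_; rw [hv s]; ring
    _ = (∑ s, lam s * ∫ x, f x ^ 2 ∂(μ[|D s])) - ∑ s, lam s * m s ^ 2 :=
        Finset.sum_sub_distrib _ _
    _ ≤ (∫ x, f x ^ 2 ∂μ) - (∑ s, lam s * m s) ^ 2 := by
        rw [← hd2]; linarith [hCS]
    _ = variance f μ := by rw [hvar, hd1]

theorem stmt18 (d S : ℕ) (μ : Measure (Fin d → ℝ)) [IsProbabilityMeasure μ]
    (QHF QLF : (Fin d → ℝ) → ℝ) (hHF : MemLp QHF 2 μ) (hLF : MemLp QLF 2 μ)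
    (D : Fin S → Set (Fin d → ℝ)) (hDm : ∀ s, MeasurableSet (D s))
    (hDpos : ∀ s, 0 < μ (D s))
    (hDdisj : ∀ i j, i ≠ j → μ (D i ∩ D j) = 0)
    (hDcov : μ (⋃ s, D s) = 1)
    (w : ℝ) (hw : 0 < w) (hw1 : w < 1)
    (ρ : ℝ) (ρs : Fin S → ℝ)
    (hρdef : ρ = (∫ x, QHF x * QLF x ∂μ - (∫ x, QHF x ∂μ) * (∫ x, QLF x ∂μ))
        / Real.sqrt (variance QHF μ * variance QLF μ))
    (hρsdef : ∀ s, ρs s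
      = (∫ x, QHF x * QLF x ∂(μ[|D s])
          - (∫ x, QHF x ∂(μ[|D s])) * (∫ x, QLF x ∂(μ[|D s])))
        / Real.sqrt (variance QHF (μ[|D s]) * variance QLF (μ[|D s])))
    (hρ0 : 0 ≤ ρ) (hρw : 4 * w / (1 + w) ^ 2 ≤ ρ ^ 2)
    (hρs : ∀ s, ρ ≤ ρs s)
    (N : ℝ) (hN : 0 < N) :
    (1 / N) * ∑ s, (μ (D s)).toReal * variance QHF (μ[|D s])
        * (Real.sqrt (1 - ρs s ^ 2) + Real.sqrt (w * ρs s ^ 2)) ^ 2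
      ≤ (1 / N) * variance QHF μ
        * (Real.sqrt (1 - ρ ^ 2) + Real.sqrt (w * ρ ^ 2)) ^ 2 := by
  haveI : ∀ s, IsProbabilityMeasure (μ[|D s]) :=
    fun s => cond_isProbabilityMeasure (hDpos s).ne'
  -- ρ is positive
  have hρpos : 0 < ρ := by
    rcases hρ0.lt_or_eq with h | h
    · exact h
    · exfalso
      have h1 : 0 < 4 * w / (1 + w) ^ 2 := by positivity
      rw [← h] at hρw; simp at hρw; linarith
  -- ρ ≤ 1
  have hρ1 : ρ ≤ 1 := by
    have hden : 0 < Real.sqrt (variance QHF μ * variance QLF μ) := by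
      rcases (Real.sqrt_nonneg (variance QHF μ * variance QLF μ)).lt_or_eq with h | h
      · exact h
      · exfalso; rw [hρdef, ← h, div_zero] at hρpos; exact lt_irrefl 0 hρpos
    rw [hρdef, div_le_one hden]
    exact covCS μ hHF hLF
  -- ρs s ≤ 1
  have hρs1 : ∀ s, ρs s ≤ 1 := by
    intro s
    have hden0 : 0 ≤ Real.sqrt (variance QHF (μ[|D s]) * variance QLF (μ[|D s])) :=
      Real.sqrt_nonneg _
    rcases hden0.lt_or_eq with h | h
    · rw [hρsdef s, div_le_one h]
      exact covCS (μ[|D s]) (memLp_cond' μ (hDpos s).ne' hHF) (memLp_cond' μ (hDpos s).ne' hLF)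
    · exfalso
      have : ρs s = 0 := by rw [hρsdef s, ← h, div_zero]
      linarith [hρs s, hρpos]
  -- key inequality for f monotonicity
  have hkey : w * (1 - ρ ^ 2) ≤ ρ ^ 2 := by
    have h4 : 4 * w ≤ ρ ^ 2 * (1 + w) ^ 2 := by
      have := (div_le_iff₀ (by positivity : (0:ℝ) < (1 + w) ^ 2)).1 hρw
      linarith
    nlinarith [mul_nonneg (mul_nonneg (sq_nonneg ρ) (by linarith : (0:ℝ) ≤ 1 + w))
      (by linarith : (0:ℝ) ≤ 1 - w), hw.le]
  set fρ := (Real.sqrt (1 - ρ ^ 2) + Real.sqrt (w * ρ ^ 2)) ^ 2 with hfρ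
  have hfρ0 : 0 ≤ fρ := sq_nonneg _
  have hmain : ∑ s, (μ (D s)).toReal * variance QHF (μ[|D s])
      * (Real.sqrt (1 - ρs s ^ 2) + Real.sqrt (w * ρs s ^ 2)) ^ 2
      ≤ variance QHF μ * fρ := by
    calc ∑ s, (μ (D s)).toReal * variance QHF (μ[|D s])
        * (Real.sqrt (1 - ρs s ^ 2) + Real.sqrt (w * ρs s ^ 2)) ^ 2
        ≤ ∑ s, (μ (D s)).toReal * variance QHF (μ[|D s]) * fρ := by
          refine Finset.sum_le_sum fun s _ => ?_
          refine mul_le_mul_of_nonneg_left ?_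
            (mul_nonneg ENNReal.toReal_nonneg (variance_nonneg _ _))
          exact monoF hw.le hρ0 (hρs s) (hρs1 s) hkey
      _ = (∑ s, (μ (D s)).toReal * variance QHF (μ[|D s])) * fρ := by
          rw [Finset.sum_mul]
      _ ≤ variance QHF μ * fρ := by
          refine mul_le_mul_of_nonneg_right ?_ hfρ0
          exact totalVar μ D hDm hDpos hDdisj hDcov hHF
  rw [mul_assoc]
  exact mul_le_mul_of_nonneg_left hmain (by positivity)
end

section
/- (Stratified multifidelity variance reduction, allocation (1).) Suppose ρ² ≥ 4w/(1+w)² and the weighted average correlation ρ̄ = Σ_s λ(A_s) ρ_s satisfies ρ̄ ≥ ρ. Then the optimally allocated stratified multifidelity estimator satisfies Var[q̂_sMFMC^{(1)}] = (1/N)(Σ_s λ(A_s) σ_s (√(1−ρ_s²)+√(wρ_s²)))² ≤ (1/N) Var[Q^HF] (√(1−ρ²)+√(wρ²))² = Var[q̂_MFMC], where σ_s = √(Var^μ[Q^HF(X)|X∈D_s]). -/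
set_option maxHeartbeats 1000000

open MeasureTheory ProbabilityTheory

section AuxAlgebra

private lemma aux_xu (x ρ u v : ℝ) (hx0 : 0 ≤ x) (hρ0 : 0 ≤ ρ)
    (hu : u^2 = 1 - x^2) (hv : v^2 = 1 - ρ^2) :
    x*u*v ≤ ρ*v^2 + (1-2*ρ^2)*(x-ρ) := by
  nlinarith [mul_nonneg hx0 (sq_nonneg (u-v)),
    mul_nonneg (sq_nonneg (x-ρ)) (by linarith : (0:ℝ) ≤ x + 2*ρ)]

private lemma gsq_eq (w x : ℝ) (hw : 0 ≤ w) (hx0 : 0 ≤ x) (hx1 : x ≤ 1) :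
    (Real.sqrt (1 - x^2) + Real.sqrt (w * x^2))^2
      = 1 - (1-w)*x^2 + 2*Real.sqrt w * (x * Real.sqrt (1 - x^2)) := by
  have h1 : (0:ℝ) ≤ 1 - x^2 := by nlinarith
  have e1 : Real.sqrt (1 - x^2) ^ 2 = 1 - x^2 := Real.sq_sqrt h1
  have e2 : Real.sqrt (w * x^2) = Real.sqrt w * x := by
    rw [Real.sqrt_mul hw, Real.sqrt_sq hx0]
  rw [add_sq, e1, e2]
  have e3 : (Real.sqrt w * x)^2 = w * x^2 := by
    rw [mul_pow, Real.sq_sqrt hw]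
  rw [e3]; ring

private lemma slope_nonpos (w ρ v : ℝ) (hw : 0 < w) (hw1 : w < 1) (hρ0 : 0 ≤ ρ)
    (hρw : 4*w/(1+w)^2 ≤ ρ^2) (hv : v^2 = 1 - ρ^2) (hv0 : 0 < v) :
    2*Real.sqrt w*(1-2*ρ^2)/v - 2*(1-w)*ρ ≤ 0 := by
  have hsw : Real.sqrt w ^ 2 = w := Real.sq_sqrt hw.le
  have hsw0 : 0 ≤ Real.sqrt w := Real.sqrt_nonneg w
  have h4w : 4*w ≤ ρ^2*(1+w)^2 := by
    rw [div_le_iff₀ (by positivity)] at hρw; linarith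
  rcases le_or_gt (1 - 2*ρ^2) 0 with hcase | hcase
  · have h1 : 2*Real.sqrt w*(1-2*ρ^2)/v ≤ 0 :=
      div_nonpos_of_nonpos_of_nonneg (by nlinarith) hv0.le
    nlinarith
  · rw [sub_nonpos, div_le_iff₀ hv0]
    have f1 : 0 ≤ (1+w)*ρ^2 - w := by nlinarith
    have f2 : 0 ≤ 1 - (1+w)*ρ^2 := by nlinarith
    have a2 : (2*Real.sqrt w*(1-2*ρ^2))^2 = 4*w*(1-2*ρ^2)^2 := by
      rw [show (2*Real.sqrt w*(1-2*ρ^2))^2 = 4*(Real.sqrt w^2)*(1-2*ρ^2)^2 from by ring, hsw]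
    have b2 : (2*(1-w)*ρ*v)^2 = 4*(1-w)^2*ρ^2*(1-ρ^2) := by
      rw [show (2*(1-w)*ρ*v)^2 = 4*(1-w)^2*ρ^2*(v^2) from by ring, hv]
    have hsq : (2*Real.sqrt w*(1-2*ρ^2))^2 ≤ (2*(1-w)*ρ*v)^2 := by
      rw [a2, b2]; nlinarith [mul_nonneg f1 f2]
    have ha : 0 ≤ 2*Real.sqrt w*(1-2*ρ^2) := by nlinarith [mul_nonneg hsw0 hcase.le]
    have hb : 0 ≤ 2*(1-w)*ρ*v := by
      have h1w : (0:ℝ) ≤ 1 - w := by linarith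
      nlinarith [mul_nonneg (mul_nonneg h1w hρ0) hv0.le]
    have := Real.sqrt_le_sqrt hsq
    rwa [Real.sqrt_sq ha, Real.sqrt_sq hb] at this

private lemma key_sum {S : ℕ} (w : ℝ) (hw : 0 < w) (hw1 : w < 1)
    (ρ : ℝ) (hρ0 : 0 ≤ ρ) (hρ1 : ρ ≤ 1) (hρw : 4*w/(1+w)^2 ≤ ρ^2)
    (lam t : Fin S → ℝ) (hlam : ∀ s, 0 < lam s) (hsum : ∑ s, lam s = 1)
    (ht0 : ∀ s, 0 ≤ t s) (ht1 : ∀ s, t s ≤ 1)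
    (hbar : ρ ≤ ∑ s, lam s * t s) :
    ∑ s, lam s * (Real.sqrt (1 - t s^2) + Real.sqrt (w * t s^2))^2
      ≤ (Real.sqrt (1-ρ^2) + Real.sqrt (w*ρ^2))^2 := by
  have hsw : Real.sqrt w ^ 2 = w := Real.sq_sqrt hw.le
  have hsw0 : 0 ≤ Real.sqrt w := Real.sqrt_nonneg w
  rcases eq_or_lt_of_le hρ1 with hρeq | hρlt
  · subst hρeq
    have hts : ∀ s, t s = 1 := by
      intro s
      by_contra hne
      have hlt : t s < 1 := lt_of_le_of_ne (ht1 s) hne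
      have h1 : ∑ s', lam s' * t s' < ∑ s', lam s' * 1 := by
        apply Finset.sum_lt_sum
        · intro i _; exact mul_le_mul_of_nonneg_left (ht1 i) (hlam i).le
        · exact ⟨s, Finset.mem_univ s, by nlinarith [hlam s]⟩
      simp only [mul_one] at h1
      rw [hsum] at h1
      linarith
    have hW : ∀ s, lam s * (Real.sqrt (1 - t s^2) + Real.sqrt (w * t s^2))^2
        = lam s * w := by
      intro s; rw [hts s]; norm_num [Real.sq_sqrt hw.le]
    rw [Finset.sum_congr rfl (fun s _ => hW s), ← Finset.sum_mul, hsum, one_mul]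
    norm_num [Real.sq_sqrt hw.le]
  · set v := Real.sqrt (1 - ρ^2) with hvdef
    have hv2 : v^2 = 1 - ρ^2 := Real.sq_sqrt (by nlinarith)
    have hv0 : 0 < v := Real.sqrt_pos.2 (by nlinarith)
    set c := 2*Real.sqrt w*(1-2*ρ^2)/v - 2*(1-w)*ρ with hcdef
    set A := 1 - (1-w)*ρ^2 + 2*Real.sqrt w * (ρ * v) with hAdef
    have hc : c ≤ 0 := slope_nonpos w ρ v hw hw1 hρ0 hρw hv2 hv0
    have hρg : (Real.sqrt (1-ρ^2) + Real.sqrt (w*ρ^2))^2 = A :=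
      gsq_eq w ρ hw.le hρ0 hρ1
    have tangent : ∀ s, lam s * (Real.sqrt (1 - t s^2) + Real.sqrt (w * t s^2))^2
        ≤ lam s * (A + c * (t s - ρ)) := by
      intro s
      apply mul_le_mul_of_nonneg_left _ (hlam s).le
      rw [gsq_eq w (t s) hw.le (ht0 s) (ht1 s)]
      set x := t s with hxdef
      set u := Real.sqrt (1 - x^2) with hudef
      have hu2 : u^2 = 1 - x^2 := Real.sq_sqrt (by nlinarith [ht0 s, ht1 s])
      have hxu : x*u*v ≤ ρ*v^2 + (1-2*ρ^2)*(x-ρ) :=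
        aux_xu x ρ u v (ht0 s) hρ0 hu2 hv2
      have key : x*u - ρ*v ≤ (1-2*ρ^2)*(x-ρ)/v := by
        rw [le_div_iff₀ hv0]; nlinarith
      have F1 : Real.sqrt w * (x*u - ρ*v) ≤ Real.sqrt w * ((1-2*ρ^2)*(x-ρ)/v) :=
        mul_le_mul_of_nonneg_left key hsw0
      have F2 : 0 ≤ (1-w)*(x-ρ)^2 := by
        apply mul_nonneg (by linarith) (sq_nonneg _)
      have hcc : A + c * (x - ρ) = A + 2*Real.sqrt w * ((1-2*ρ^2)*(x-ρ)/v) - 2*(1-w)*ρ*(x-ρ) := by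
        rw [hcdef]; ring
      rw [hcc, hAdef]
      nlinarith [F1, F2]
    have expand : ∀ s, lam s * (A + c * (t s - ρ))
        = A * lam s + c * (lam s * t s) - c * ρ * lam s := fun s => by ring
    calc ∑ s, lam s * (Real.sqrt (1 - t s^2) + Real.sqrt (w * t s^2))^2
        ≤ ∑ s, lam s * (A + c * (t s - ρ)) :=
          Finset.sum_le_sum (fun s _ => tangent s)
      _ = A + c * ((∑ s, lam s * t s) - ρ) := by
          rw [Finset.sum_congr rfl (fun s _ => expand s), Finset.sum_sub_distrib,
            Finset.sum_add_distrib, ← Finset.mul_sum, ← Finset.mul_sum, ← Finset.mul_sum, hsum]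
          ring
      _ ≤ A := by
          have := mul_nonpos_of_nonpos_of_nonneg hc
            (by linarith : (0:ℝ) ≤ (∑ s, lam s * t s) - ρ)
          linarith
      _ = _ := hρg.symm

end AuxAlgebra

section AuxMeasure

variable {α : Type*} [MeasurableSpace α]

private lemma memLp_mul_integrable (ν : Measure α) (f g : α → ℝ)
    (hf : MemLp f 2 ν) (hg : MemLp g 2 ν) :
    Integrable (fun x => f x * g x) ν := by
  have h := hf.smul (E := ℝ) (𝕜 := ℝ) hg (p := 2) (q := 2) (r := 1)
  rw [memLp_one_iff_integrable] at h
  exact h.congr (ae_of_all _ fun x => mul_comm (g x) (f x))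

private lemma variance_eq_integral_sq (ν : Measure α) [IsProbabilityMeasure ν] (f : α → ℝ)
    (hf : MemLp f 2 ν) :
    variance f ν = ∫ x, (f x - ∫ y, f y ∂ν) ^ 2 ∂ν := by
  rw [variance_eq_integral hf.aestronglyMeasurable.aemeasurable]

private lemma abs_cov_le (ν : Measure α) [IsProbabilityMeasure ν] (f g : α → ℝ)
    (hf : MemLp f 2 ν) (hg : MemLp g 2 ν) :
    |∫ x, f x * g x ∂ν - (∫ x, f x ∂ν) * (∫ x, g x ∂ν)|
      ≤ Real.sqrt (variance f ν) * Real.sqrt (variance g ν) := by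
  set ma := ∫ x, f x ∂ν with hma
  set mb := ∫ x, g x ∂ν with hmb
  have hfc : MemLp (fun x => f x - ma) 2 ν := hf.sub (memLp_const ma)
  have hgc : MemLp (fun x => g x - mb) 2 ν := hg.sub (memLp_const mb)
  have hfg : Integrable (fun x => f x * g x) ν := memLp_mul_integrable ν f g hf hg
  have hfi : Integrable f ν := hf.integrable one_le_two
  have hgi : Integrable g ν := hg.integrable one_le_two
  have h1 : Integrable (fun x => f x * g x + ma * mb) ν := hfg.add (integrable_const _)
  have h2 : Integrable (fun x => mb * f x + ma * g x) ν :=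
    (hfi.const_mul mb).add (hgi.const_mul ma)
  have hcov : ∫ x, (f x - ma) * (g x - mb) ∂ν = ∫ x, f x * g x ∂ν - ma * mb := by
    have e1 : ∀ x, (f x - ma) * (g x - mb) = (f x * g x + ma * mb) - (mb * f x + ma * g x) :=
      fun x => by ring
    rw [integral_congr_ae (ae_of_all _ e1), integral_sub h1 h2, integral_add hfg
      (integrable_const _), integral_add (hfi.const_mul mb) (hgi.const_mul ma)]
    simp only [integral_const_mul, integral_const]
    simp [measure_univ, ← hma, ← hmb]
    ring
  have habs : MemLp (fun x => |f x - ma|) 2 ν := by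
    have := hfc.norm; simpa [Real.norm_eq_abs] using this
  have hgabs : MemLp (fun x => |g x - mb|) 2 ν := by
    have := hgc.norm; simpa [Real.norm_eq_abs] using this
  have hconj : Real.HolderConjugate 2 2 := Real.HolderConjugate.two_two
  have hcs := integral_mul_le_Lp_mul_Lq_of_nonneg hconj
    (ae_of_all _ fun x => abs_nonneg (f x - ma)) (ae_of_all _ fun x => abs_nonneg (g x - mb))
    (by simpa using habs) (by simpa using hgabs)
  have e2 : ∀ (y : ℝ), |y| ^ (2:ℝ) = y ^ 2 := fun y => by
    rw [show (2:ℝ) = ((2:ℕ):ℝ) by norm_num, Real.rpow_natCast, sq_abs]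
  have hintf2 : ∫ x, |f x - ma| ^ (2:ℝ) ∂ν = ∫ x, (f x - ma)^2 ∂ν :=
    integral_congr_ae (ae_of_all _ fun x => e2 _)
  have hintg2 : ∫ x, |g x - mb| ^ (2:ℝ) ∂ν = ∫ x, (g x - mb)^2 ∂ν :=
    integral_congr_ae (ae_of_all _ fun x => e2 _)
  rw [hintf2, hintg2] at hcs
  have hrw1 : (∫ x, (f x - ma)^2 ∂ν) ^ (1/(2:ℝ)) = Real.sqrt (∫ x, (f x - ma)^2 ∂ν) := by
    rw [Real.sqrt_eq_rpow]
  have hrw2 : (∫ x, (g x - mb)^2 ∂ν) ^ (1/(2:ℝ)) = Real.sqrt (∫ x, (g x - mb)^2 ∂ν) := by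
    rw [Real.sqrt_eq_rpow]
  rw [hrw1, hrw2] at hcs
  have habsint : |∫ x, (f x - ma) * (g x - mb) ∂ν| ≤ ∫ x, |f x - ma| * |g x - mb| ∂ν := by
    have h := norm_integral_le_integral_norm (μ := ν) (fun x => (f x - ma) * (g x - mb))
    simpa [Real.norm_eq_abs, abs_mul] using h
  rw [variance_eq_integral_sq ν f hf, variance_eq_integral_sq ν g hg, ← hma, ← hmb]
  calc |∫ x, f x * g x ∂ν - ma * mb| = |∫ x, (f x - ma) * (g x - mb) ∂ν| := by rw [hcov]
    _ ≤ ∫ x, |f x - ma| * |g x - mb| ∂ν := habsint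
    _ ≤ _ := hcs

private lemma corr_abs_le_one (ν : Measure α) [IsProbabilityMeasure ν] (f g : α → ℝ)
    (hf : MemLp f 2 ν) (hg : MemLp g 2 ν) :
    |(∫ x, f x * g x ∂ν - (∫ x, f x ∂ν) * (∫ x, g x ∂ν))
      / Real.sqrt (variance f ν * variance g ν)| ≤ 1 := by
  have hD : Real.sqrt (variance f ν * variance g ν)
      = Real.sqrt (variance f ν) * Real.sqrt (variance g ν) :=
    Real.sqrt_mul (variance_nonneg _ _) _
  have hcov := abs_cov_le ν f g hf hg
  rcases eq_or_ne (Real.sqrt (variance f ν) * Real.sqrt (variance g ν)) 0 with h0 | h0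
  · rw [hD, h0]
    simp
  · have hpos : 0 < Real.sqrt (variance f ν) * Real.sqrt (variance g ν) := by
      rcases (mul_nonneg (Real.sqrt_nonneg _) (Real.sqrt_nonneg _)).lt_or_eq with h | h
      · exact h
      · exact absurd h.symm h0
    rw [abs_div, abs_of_nonneg (Real.sqrt_nonneg _), hD, div_le_one hpos]
    exact hcov

private lemma variance_le_integral_sq (ν : Measure α) [IsProbabilityMeasure ν] (f : α → ℝ)
    (hf : MemLp f 2 ν) (M : ℝ) :
    variance f ν ≤ ∫ x, (f x - M) ^ 2 ∂ν := by
  set a := ∫ x, f x ∂ν with ha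
  have hfc : MemLp (fun x => f x - a) 2 ν := hf.sub (memLp_const a)
  have hsq : Integrable (fun x => (f x - a)^2) ν := hfc.integrable_sq
  have hfi : Integrable f ν := hf.integrable one_le_two
  have hlin : Integrable (fun x => f x - a) ν := hfi.sub (integrable_const a)
  have hzero : ∫ x, (f x - a) ∂ν = 0 := by
    rw [integral_sub hfi (integrable_const a), integral_const]
    simp [← ha]
  have hexp : ∫ x, (f x - M)^2 ∂ν
      = ∫ x, (f x - a)^2 ∂ν + (2*(a - M)) * ∫ x, (f x - a) ∂ν + (a - M)^2 := by
    have e : ∀ x, (f x - M)^2 = ((f x - a)^2 + (2*(a-M))*(f x - a)) + (a - M)^2 :=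
      fun x => by ring
    have hsum1 : Integrable (fun x => (f x - a)^2 + 2*(a-M)*(f x - a)) ν :=
      hsq.add (hlin.const_mul _)
    rw [integral_congr_ae (ae_of_all _ e),
      integral_add hsum1 (integrable_const _),
      integral_add hsq (hlin.const_mul _), integral_const_mul, integral_const]
    simp [measure_univ]
  have hvar : variance f ν = ∫ x, (f x - a)^2 ∂ν := by
    rw [variance_eq_integral hf.aestronglyMeasurable.aemeasurable]
  rw [hvar, hexp, hzero]
  nlinarith [sq_nonneg (a - M)]

private lemma total_variance_le {d S : ℕ} (μ : Measure (Fin d → ℝ)) [IsProbabilityMeasure μ]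
    (QHF : (Fin d → ℝ) → ℝ) (hHF : MemLp QHF 2 μ)
    (D : Fin S → Set (Fin d → ℝ)) (hDm : ∀ s, MeasurableSet (D s))
    (hDpos : ∀ s, 0 < μ (D s))
    (hDdisj : ∀ i j, i ≠ j → μ (D i ∩ D j) = 0) :
    ∑ s, (μ (D s)).toReal * variance QHF (μ[|D s]) ≤ variance QHF μ := by
  set M := ∫ x, QHF x ∂μ with hM
  have hMc : MemLp (fun x => QHF x - M) 2 μ := hHF.sub (memLp_const M)
  have hint : Integrable (fun x => (QHF x - M)^2) μ := hMc.integrable_sq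
  have hcond : ∀ s, (μ[|D s]) = (μ (D s))⁻¹ • μ.restrict (D s) := fun s => rfl
  have hLp : ∀ s, MemLp QHF 2 (μ[|D s]) := by
    intro s
    rw [hcond s]
    exact (hHF.restrict _).smul_measure (ENNReal.inv_ne_top.2 (hDpos s).ne')
  have hfin : ∀ s, (μ (D s)) ≠ ⊤ := fun s => measure_ne_top μ (D s)
  have hne : ∀ s, (μ (D s)) ≠ 0 := fun s => (hDpos s).ne'
  have htR : ∀ s, (0:ℝ) < (μ (D s)).toReal := fun s =>
    ENNReal.toReal_pos (hne s) (hfin s)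
  have key1 : ∀ s, (μ (D s)).toReal * variance QHF (μ[|D s])
      ≤ ∫ x in D s, (QHF x - M)^2 ∂μ := by
    intro s
    haveI : IsProbabilityMeasure (μ[|D s]) := cond_isProbabilityMeasure (hne s)
    have h1 : variance QHF (μ[|D s]) ≤ ∫ x, (QHF x - M)^2 ∂(μ[|D s]) :=
      variance_le_integral_sq _ QHF (hLp s) M
    have h2 : ∫ x, (QHF x - M)^2 ∂(μ[|D s])
        = (μ (D s)).toReal⁻¹ * ∫ x in D s, (QHF x - M)^2 ∂μ := by
      rw [hcond s, integral_smul_measure, ENNReal.toReal_inv, smul_eq_mul]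
    calc (μ (D s)).toReal * variance QHF (μ[|D s])
        ≤ (μ (D s)).toReal * ((μ (D s)).toReal⁻¹ * ∫ x in D s, (QHF x - M)^2 ∂μ) := by
          rw [← h2]
          exact mul_le_mul_of_nonneg_left h1 (htR s).le
      _ = ∫ x in D s, (QHF x - M)^2 ∂μ := by
          rw [← mul_assoc, mul_inv_cancel₀ (htR s).ne', one_mul]
  have key2 : ∑ s, ∫ x in D s, (QHF x - M)^2 ∂μ ≤ ∫ x, (QHF x - M)^2 ∂μ := by
    have hd : Pairwise (Function.onFun (AEDisjoint μ) D) := fun i j hij => hDdisj i j hij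
    have hmeas : ∀ s, NullMeasurableSet (D s) μ := fun s => (hDm s).nullMeasurableSet
    have e := integral_iUnion_ae (μ := μ) hmeas hd hint.integrableOn
    have e2 : ∑ s, ∫ x in D s, (QHF x - M)^2 ∂μ = ∫ x in ⋃ s, D s, (QHF x - M)^2 ∂μ := by
      rw [e, tsum_fintype]
    rw [e2]
    exact setIntegral_le_integral hint (ae_of_all _ fun x => sq_nonneg _)
  have hvar : variance QHF μ = ∫ x, (QHF x - M)^2 ∂μ := by
    rw [variance_eq_integral hHF.aestronglyMeasurable.aemeasurable]
  rw [hvar]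
  exact le_trans (Finset.sum_le_sum fun s _ => key1 s) key2

end AuxMeasure

theorem stmt19 (d S : ℕ) (μ : Measure (Fin d → ℝ)) [IsProbabilityMeasure μ]
    (QHF QLF : (Fin d → ℝ) → ℝ) (hHF : MemLp QHF 2 μ) (hLF : MemLp QLF 2 μ)
    (D : Fin S → Set (Fin d → ℝ)) (hDm : ∀ s, MeasurableSet (D s))
    (hDpos : ∀ s, 0 < μ (D s))
    (hDdisj : ∀ i j, i ≠ j → μ (D i ∩ D j) = 0)
    (hDcov : μ (⋃ s, D s) = 1)
    (w : ℝ) (hw : 0 < w) (hw1 : w < 1)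
    (ρ : ℝ) (ρs : Fin S → ℝ)
    (hρdef : ρ = (∫ x, QHF x * QLF x ∂μ - (∫ x, QHF x ∂μ) * (∫ x, QLF x ∂μ))
        / Real.sqrt (variance QHF μ * variance QLF μ))
    (hρsdef : ∀ s, ρs s
      = (∫ x, QHF x * QLF x ∂(μ[|D s])
          - (∫ x, QHF x ∂(μ[|D s])) * (∫ x, QLF x ∂(μ[|D s])))
        / Real.sqrt (variance QHF (μ[|D s]) * variance QLF (μ[|D s])))
    (hρ0 : 0 ≤ ρ) (hρw : 4 * w / (1 + w) ^ 2 ≤ ρ ^ 2)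
    (hρbar : ρ ≤ ∑ s, (μ (D s)).toReal * ρs s)
    (N : ℝ) (hN : 0 < N) :
    (1 / N) * (∑ s, (μ (D s)).toReal * Real.sqrt (variance QHF (μ[|D s]))
        * (Real.sqrt (1 - ρs s ^ 2) + Real.sqrt (w * ρs s ^ 2))) ^ 2
      ≤ (1 / N) * variance QHF μ
        * (Real.sqrt (1 - ρ ^ 2) + Real.sqrt (w * ρ ^ 2)) ^ 2 := by
  have hfin : ∀ s, (μ (D s)) ≠ ⊤ := fun s => measure_ne_top μ (D s)
  have hne : ∀ s, (μ (D s)) ≠ 0 := fun s => (hDpos s).ne'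
  set lam : Fin S → ℝ := fun s => (μ (D s)).toReal with hlamdef
  have hlam : ∀ s, 0 < lam s := fun s => ENNReal.toReal_pos (hne s) (hfin s)
  -- sum of weights is 1
  have hsum : ∑ s, lam s = 1 := by
    have hd : Pairwise (Function.onFun (AEDisjoint μ) D) := fun i j hij => hDdisj i j hij
    have hmeas : ∀ s, NullMeasurableSet (D s) μ := fun s => (hDm s).nullMeasurableSet
    have h := measure_iUnion₀ hd hmeas
    rw [hDcov, tsum_fintype] at h
    have h2 := congrArg ENNReal.toReal h
    rw [ENNReal.toReal_one, ENNReal.toReal_sum (fun s _ => hfin s)] at h2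
    exact h2.symm
  -- conditional measures are probability measures and MemLp transfers
  have hprob : ∀ s, IsProbabilityMeasure (μ[|D s]) :=
    fun s => cond_isProbabilityMeasure (hne s)
  have hcond : ∀ s, (μ[|D s]) = (μ (D s))⁻¹ • μ.restrict (D s) := fun s => rfl
  have hLpH : ∀ s, MemLp QHF 2 (μ[|D s]) := by
    intro s
    rw [hcond s]
    exact (hHF.restrict _).smul_measure (ENNReal.inv_ne_top.2 (hDpos s).ne')
  have hLpL : ∀ s, MemLp QLF 2 (μ[|D s]) := by
    intro s
    rw [hcond s]
    exact (hLF.restrict _).smul_measure (ENNReal.inv_ne_top.2 (hDpos s).ne')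
  -- stratum correlations are bounded by 1 in absolute value
  have ht1 : ∀ s, |ρs s| ≤ 1 := by
    intro s
    haveI := hprob s
    rw [hρsdef s]
    exact corr_abs_le_one (μ[|D s]) QHF QLF (hLpH s) (hLpL s)
  set t : Fin S → ℝ := fun s => |ρs s| with htdef
  have ht0 : ∀ s, 0 ≤ t s := fun s => abs_nonneg _
  have htle : ∀ s, ρs s ≤ t s := fun s => le_abs_self _
  -- ρ ≤ weighted average of |ρs|
  have hbar' : ρ ≤ ∑ s, lam s * t s := by
    refine hρbar.trans (Finset.sum_le_sum fun s _ => ?_)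
    exact mul_le_mul_of_nonneg_left (htle s) (hlam s).le
  have hρ1 : ρ ≤ 1 := by
    have h1 : ∑ s, lam s * t s ≤ ∑ s, lam s * 1 :=
      Finset.sum_le_sum fun s _ => mul_le_mul_of_nonneg_left (ht1 s) (hlam s).le
    simp only [mul_one] at h1
    rw [hsum] at h1
    linarith
  -- the Jensen/monotonicity step
  have hkey : ∑ s, lam s * (Real.sqrt (1 - t s^2) + Real.sqrt (w * t s^2))^2
      ≤ (Real.sqrt (1-ρ^2) + Real.sqrt (w*ρ^2))^2 :=
    key_sum w hw hw1 ρ hρ0 hρ1 hρw lam t hlam hsum ht0 ht1 hbar'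
  have hGt : ∀ s, Real.sqrt (1 - ρs s ^ 2) + Real.sqrt (w * ρs s ^ 2)
      = Real.sqrt (1 - t s^2) + Real.sqrt (w * t s^2) := by
    intro s
    simp only [htdef, sq_abs]
  -- abbreviations
  set σ : Fin S → ℝ := fun s => Real.sqrt (variance QHF (μ[|D s])) with hσdef
  have hσ0 : ∀ s, 0 ≤ σ s := fun s => Real.sqrt_nonneg _
  set G : Fin S → ℝ := fun s => Real.sqrt (1 - ρs s ^ 2) + Real.sqrt (w * ρs s ^ 2) with hGdef
  have hG0 : ∀ s, 0 ≤ G s := fun s => add_nonneg (Real.sqrt_nonneg _) (Real.sqrt_nonneg _)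
  -- Cauchy-Schwarz
  have hcs : (∑ s, lam s * σ s * G s)^2
      ≤ (∑ s, lam s * σ s^2) * (∑ s, lam s * G s^2) := by
    have h := Finset.sum_mul_sq_le_sq_mul_sq Finset.univ
      (fun s => Real.sqrt (lam s) * σ s) (fun s => Real.sqrt (lam s) * G s)
    have e1 : ∀ s : Fin S, (Real.sqrt (lam s) * σ s) * (Real.sqrt (lam s) * G s)
        = lam s * σ s * G s := by
      intro s
      rw [show (Real.sqrt (lam s) * σ s) * (Real.sqrt (lam s) * G s)
        = (Real.sqrt (lam s) * Real.sqrt (lam s)) * (σ s * G s) from by ring,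
        Real.mul_self_sqrt (hlam s).le]
      ring
    have e2 : ∀ s : Fin S, (Real.sqrt (lam s) * σ s)^2 = lam s * σ s^2 := by
      intro s
      rw [mul_pow, Real.sq_sqrt (hlam s).le]
    have e3 : ∀ s : Fin S, (Real.sqrt (lam s) * G s)^2 = lam s * G s^2 := by
      intro s
      rw [mul_pow, Real.sq_sqrt (hlam s).le]
    rw [Finset.sum_congr rfl (fun s _ => e1 s), Finset.sum_congr rfl (fun s _ => e2 s),
      Finset.sum_congr rfl (fun s _ => e3 s)] at h
    exact h
  -- variance decomposition bound
  have hσsq : ∀ s, σ s ^ 2 = variance QHF (μ[|D s]) := fun s =>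
    Real.sq_sqrt (variance_nonneg _ _)
  have htot : ∑ s, lam s * σ s^2 ≤ variance QHF μ := by
    rw [Finset.sum_congr rfl (fun s _ => by rw [hσsq s])]
    exact total_variance_le μ QHF hHF D hDm hDpos hDdisj
  have hG2 : ∀ s, G s = Real.sqrt (1 - t s^2) + Real.sqrt (w * t s^2) := fun s => hGt s
  have hkey' : ∑ s, lam s * G s^2 ≤ (Real.sqrt (1-ρ^2) + Real.sqrt (w*ρ^2))^2 := by
    rw [Finset.sum_congr rfl (fun s _ => by rw [hG2 s])]
    exact hkey
  -- combine
  have hsum1nn : 0 ≤ ∑ s, lam s * G s^2 :=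
    Finset.sum_nonneg fun s _ => mul_nonneg (hlam s).le (sq_nonneg _)
  have hfinal : (∑ s, lam s * σ s * G s)^2
      ≤ variance QHF μ * (Real.sqrt (1-ρ^2) + Real.sqrt (w*ρ^2))^2 :=
    le_trans hcs (mul_le_mul htot hkey' hsum1nn (variance_nonneg _ _))
  have hNN : (0:ℝ) ≤ 1/N := by positivity
  show (1 / N) * (∑ s, lam s * σ s * G s) ^ 2
      ≤ (1 / N) * variance QHF μ * (Real.sqrt (1 - ρ ^ 2) + Real.sqrt (w * ρ ^ 2)) ^ 2
  calc (1 / N) * (∑ s, lam s * σ s * G s) ^ 2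
      ≤ (1 / N) * (variance QHF μ * (Real.sqrt (1-ρ^2) + Real.sqrt (w*ρ^2))^2) :=
        mul_le_mul_of_nonneg_left hfinal hNN
    _ = (1 / N) * variance QHF μ * (Real.sqrt (1 - ρ ^ 2) + Real.sqrt (w * ρ ^ 2)) ^ 2 := by
        ring
end
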